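/- arXiv:1711.10610 — 4 statements merged into one kernel-verified Lean document; each statement's English description precedes it below -/
import Mathlib

section
/- Let B be a finite set, h : B → ℝ, and let b₀ ∈ B be a minimizer of h, i.e. h(b₀) = min h. Then the map β ↦ π_β(b₀) = exp(−β h(b₀))/Σ_{b'} exp(−β h(b')) is nondecreasing in β on (0,∞). -/
theorem stmt5 {B : Type*} [Fintype B] [Nonempty B] (h : B → ℝ) (b0 : B)
    (hmin : ∀ b : B, h b0 ≤ h b)
    (π : ℝ → B → ℝ)
    (hπ : ∀ β b, π β b = Real.exp (-β * h b) / ∑ b', Real.exp (-β * h b')) :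
    ∀ β1 β2 : ℝ, 0 < β1 → β1 ≤ β2 → π β1 b0 ≤ π β2 b0 := by
  intro β1 β2 hβ1 hle
  have key : ∀ β : ℝ, π β b0 = 1 / ∑ b', Real.exp (-β * (h b' - h b0)) := by
    intro β
    rw [hπ]
    rw [eq_div_iff (by positivity), div_mul_eq_mul_div, div_eq_one_iff_eq (by positivity),
      Finset.mul_sum]
    apply Finset.sum_congr rfl
    intro b _
    rw [← Real.exp_add]
    congr 1
    ring
  rw [key, key]
  apply one_div_le_one_div_of_le (by positivity)
  apply Finset.sum_le_sum
  intro b _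
  apply Real.exp_le_exp.2
  have hd : 0 ≤ h b - h b0 := by linarith [hmin b]
  nlinarith
end

section
/- Let B be a finite set, h : B → ℝ with a unique minimizer b*. For the Gibbs distributions π_β, for every b ≠ b* the map β ↦ π_β(b) is eventually nonincreasing in β, and the sum over an increasing sequence β_T ↑ ∞ of total variation differences Σ_{T=0}^∞ Σ_{b∈B} |π_{β_{T+1}}(b) − π_{β_T}(b)| is finite. -/
/-!
Dividing numerator and denominator by `exp (-β h b)` gives `π_β(b) = F_b(β)⁻¹` with
`F_b(β) = ∑ b', exp (β (h b - h b'))`. If `b` minimizes `h`, every exponent is `≤ 0`, so `F_b`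
is nonincreasing and `π_β(b)` nondecreasing. Otherwise `F_b` is a convex function tending to `∞`
(through a term `b'` with `h b' < h b`), hence eventually nondecreasing, and `π_β(b)` is
eventually nonincreasing. Along `β_T → ∞` each coordinate is therefore eventually monotone and
bounded in `[0, 1]`, so its increments telescope to a finite sum.
-/

open Finset Filter

lemma summable_abs_sub_of_eventually_antitone {u : ℕ → ℝ}
    (hu : ∀ᶠ n in atTop, u (n + 1) ≤ u n)
    (hbdd : BddBelow (Set.range u)) : Summable fun n => |u (n + 1) - u n| := by
  obtain ⟨N, hN⟩ := eventually_atTop.1 hu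
  obtain ⟨m, hm⟩ := hbdd
  have hstep : ∀ n, u (n + N + 1) ≤ u (n + N) := fun n => hN _ (Nat.le_add_left N n)
  rw [← summable_nat_add_iff N]
  simp only [abs_sub_comm, fun n => abs_of_nonneg (sub_nonneg.2 (hstep n))]
  refine summable_of_sum_range_le (c := u N - m) (fun n => sub_nonneg.2 (hstep n)) fun n => ?_
  have htelescope := sum_range_sub' (fun i => u (i + N)) n
  simp only [Nat.add_right_comm _ 1 N, zero_add] at htelescope
  rw [htelescope]
  linarith [hm (Set.mem_range_self (n + N))]

lemma summable_abs_sub_of_eventually_monotone {u : ℕ → ℝ}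
    (hu : ∀ᶠ n in atTop, u n ≤ u (n + 1))
    (hbdd : BddAbove (Set.range u)) : Summable fun n => |u (n + 1) - u n| := by
  obtain ⟨M, hM⟩ := hbdd
  have hbdd_neg : BddBelow (Set.range (-u)) :=
    ⟨-M, Set.forall_mem_range.2 fun n => neg_le_neg (hM (Set.mem_range_self n))⟩
  refine (summable_abs_sub_of_eventually_antitone (u := -u)
    (hu.mono fun n hn => neg_le_neg hn) hbdd_neg).congr fun n => ?_
  rw [Pi.neg_apply, Pi.neg_apply, neg_sub_neg, abs_sub_comm]

lemma AntitoneOn.eventually_comp_succ_le {f : ℝ → ℝ} {a : ℝ} (hf : AntitoneOn f (Set.Ici a))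
    {s : ℕ → ℝ} (hs : Monotone s) (hlim : Tendsto s atTop atTop) :
    ∀ᶠ n in atTop, f (s (n + 1)) ≤ f (s n) := by
  filter_upwards [hlim.eventually_ge_atTop a] with n hn
  exact hf hn (hn.trans (hs n.le_succ)) (hs n.le_succ)

/-- Slopes of a convex function increase, so once `f` is back above `f 0` it never decreases. -/
lemma ConvexOn.eventually_monotoneOn_Ici {f : ℝ → ℝ} (hf : ConvexOn ℝ Set.univ f)
    (htop : Tendsto f atTop atTop) : ∀ᶠ a in atTop, MonotoneOn f (Set.Ici a) := by
  filter_upwards [htop.eventually_ge_atTop (f 0), eventually_gt_atTop 0] with a hfa ha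
  intro x hx y _ hxy
  have hfx : f 0 ≤ f x := hfa.trans (hf.le_right_of_left_le'' trivial trivial ha hx hfa)
  exact hf.le_right_of_left_le'' trivial trivial (ha.trans_le hx) hxy hfx

lemma convexOn_sum_exp_mul {ι : Type*} (t : Finset ι) (c : ι → ℝ) :
    ConvexOn ℝ Set.univ fun x => ∑ i ∈ t, Real.exp (x * c i) := by
  classical
  induction t using Finset.induction_on with
  | empty => simpa using convexOn_const (0 : ℝ) convex_univ
  | insert i t hi ih =>
    simp only [sum_insert hi]
    refine ConvexOn.add ?_ ih
    simpa [Function.comp_def, mul_comm] using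
      convexOn_exp.comp_linearMap (LinearMap.mul ℝ ℝ (c i))

lemma tendsto_sum_exp_mul_atTop {ι : Type*} {t : Finset ι} {c : ι → ℝ} {i : ι}
    (hi : i ∈ t) (hc : 0 < c i) : Tendsto (fun x => ∑ j ∈ t, Real.exp (x * c j)) atTop atTop :=
  tendsto_atTop_mono (fun _ => single_le_sum (fun _ _ => (Real.exp_pos _).le) hi)
    (Real.tendsto_exp_atTop.comp (tendsto_id.atTop_mul_const hc))

section Gibbs

variable {B : Type*} [Fintype B]

noncomputable def gibbs (h : B → ℝ) (β : ℝ) (b : B) : ℝ :=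
  Real.exp (-β * h b) / ∑ b', Real.exp (-β * h b')

lemma gibbs_nonneg (h : B → ℝ) (β : ℝ) (b : B) : 0 ≤ gibbs h β b := by
  unfold gibbs
  positivity

lemma gibbs_le_one (h : B → ℝ) (β : ℝ) (b : B) : gibbs h β b ≤ 1 :=
  div_le_one_of_le₀ (single_le_sum (fun b' _ => (Real.exp_pos (-β * h b')).le) (mem_univ b))
    (sum_nonneg fun _ _ => (Real.exp_pos _).le)

lemma gibbs_eq_inv_sum (h : B → ℝ) (β : ℝ) (b : B) :
    gibbs h β b = (∑ b', Real.exp (β * (h b - h b')))⁻¹ := by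
  rw [gibbs, ← inv_div, sum_div]
  congr 1
  refine sum_congr rfl fun b' _ => ?_
  rw [← Real.exp_sub]
  ring_nf

lemma monotone_gibbs_of_forall_le (h : B → ℝ) {b : B} (hb : ∀ b', h b ≤ h b') :
    Monotone fun β => gibbs h β b := by
  intro x y hxy
  simp only [gibbs_eq_inv_sum]
  exact inv_anti₀ (sum_pos (fun _ _ => Real.exp_pos _) ⟨b, mem_univ b⟩) <|
    sum_le_sum fun b' _ =>
      Real.exp_le_exp.2 <| mul_le_mul_of_nonpos_right hxy (sub_nonpos.2 (hb b'))

lemma eventually_antitoneOn_gibbs (h : B → ℝ) {b b' : B} (hb' : h b' < h b) :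
    ∀ᶠ a in atTop, AntitoneOn (fun β => gibbs h β b) (Set.Ici a) := by
  have htop := tendsto_sum_exp_mul_atTop (c := fun b' => h b - h b') (mem_univ b') (sub_pos.2 hb')
  filter_upwards [(convexOn_sum_exp_mul _ _).eventually_monotoneOn_Ici htop] with a ha
  intro x hx y hy hxy
  simp only [gibbs_eq_inv_sum]
  exact inv_anti₀ (sum_pos (fun _ _ => Real.exp_pos _) ⟨b, mem_univ b⟩) (ha hx hy hxy)

lemma summable_abs_sub_gibbs (h : B → ℝ) {s : ℕ → ℝ} (hs : Monotone s)
    (hlim : Tendsto s atTop atTop) (b : B) :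
    Summable fun n => |gibbs h (s (n + 1)) b - gibbs h (s n) b| := by
  set u : ℕ → ℝ := fun n => gibbs h (s n) b
  by_cases hb : ∀ b', h b ≤ h b'
  · refine summable_abs_sub_of_eventually_monotone (u := u)
      (Eventually.of_forall fun n => monotone_gibbs_of_forall_le h hb (hs n.le_succ)) ?_
    exact ⟨1, Set.forall_mem_range.2 fun n => gibbs_le_one h _ b⟩
  · obtain ⟨b', hb'⟩ : ∃ b', h b' < h b := by simpa only [not_forall, not_le] using hb
    obtain ⟨a, ha⟩ := (eventually_antitoneOn_gibbs h hb').exists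
    exact summable_abs_sub_of_eventually_antitone (u := u) (ha.eventually_comp_succ_le hs hlim)
      ⟨0, Set.forall_mem_range.2 fun n => gibbs_nonneg h _ b⟩

end Gibbs

theorem stmt12 {B : Type*} [Fintype B] (h : B → ℝ) (bstar : B)
    (hmin : ∀ b : B, b ≠ bstar → h bstar < h b)
    (π : ℝ → B → ℝ)
    (hπ : ∀ β b, π β b = Real.exp (-β * h b) / ∑ b', Real.exp (-β * h b')) :
    (∀ b : B, b ≠ bstar → ∃ β0 : ℝ, ∀ β1 β2, β0 ≤ β1 → β1 ≤ β2 → π β2 b ≤ π β1 b) ∧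
      ∀ βseq : ℕ → ℝ, StrictMono βseq → (∀ T, 0 < βseq T) →
        Filter.Tendsto βseq Filter.atTop Filter.atTop →
        Summable (fun T : ℕ => ∑ b, |π (βseq (T + 1)) b - π (βseq T) b|) := by
  obtain rfl : π = gibbs h := funext₂ hπ
  refine ⟨fun b hb => ?_, fun βseq hmono _ hlim =>
    summable_sum fun b _ => summable_abs_sub_gibbs h hmono.monotone hlim b⟩
  obtain ⟨a, ha⟩ := (eventually_antitoneOn_gibbs h (hmin b hb)).exists
  exact ⟨a, fun β1 β2 h1 h2 => ha h1 (h1.trans h2) h2⟩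
end

section
/- Let B be a finite nonempty set, h : B → ℝ, β > 0, and let M = {b : h(b) = min h}. Then for every b ∉ M, π_β(b) ≤ exp(−β·γ) where γ = min_{b∉M} h(b) − min h > 0; consequently Σ_{b∈M} π_β(b) ≥ 1 − |B|·exp(−β·γ). -/
theorem stmt13 {B : Type*} [Fintype B] [Nonempty B] [DecidableEq B]
    (h : B → ℝ) (β : ℝ) (hβ : 0 < β)
    (m : ℝ) (hm : IsLeast (Set.range h) m)
    (M : Finset B) (hM : ∀ b, b ∈ M ↔ h b = m)
    (hne : ∃ b, b ∉ M)
    (γ : ℝ) (hγ : IsLeast ((fun b => h b - m) '' {b | b ∉ M}) γ)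
    (Z : ℝ) (hZ : Z = ∑ b, Real.exp (-β * h b))
    (π : B → ℝ) (hπ : ∀ b, π b = Real.exp (-β * h b) / Z) :
    0 < γ ∧ (∀ b ∉ M, π b ≤ Real.exp (-β * γ)) ∧
      1 - (Fintype.card B : ℝ) * Real.exp (-β * γ) ≤ ∑ b ∈ M, π b := by
  obtain ⟨⟨b0, hb0⟩, hml⟩ := hm
  -- γ > 0
  have hγpos : 0 < γ := by
    obtain ⟨⟨b1, hb1, hb1e⟩, _⟩ := hγ
    have h1 : h b1 ≠ m := fun he => hb1 ((hM b1).2 he)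
    have h2 : m ≤ h b1 := hml ⟨b1, rfl⟩
    have : m < h b1 := lt_of_le_of_ne h2 (Ne.symm h1)
    simp only at hb1e
    linarith
  -- Z ≥ exp(-β m)
  have hZge : Real.exp (-β * m) ≤ Z := by
    rw [hZ]
    have := Finset.single_le_sum (f := fun b => Real.exp (-β * h b))
      (fun b _ => (Real.exp_pos _).le) (Finset.mem_univ b0)
    simpa [hb0] using this
  have hZpos : 0 < Z := lt_of_lt_of_le (Real.exp_pos _) hZge
  -- tail bound
  have hbound : ∀ b ∉ M, π b ≤ Real.exp (-β * γ) := by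
    intro b hb
    have hge : γ ≤ h b - m := hγ.2 ⟨b, hb, rfl⟩
    rw [hπ]
    rw [div_le_iff₀ hZpos]
    calc Real.exp (-β * h b) = Real.exp (-β * (h b - m)) * Real.exp (-β * m) := by
            rw [← Real.exp_add]; ring_nf
      _ ≤ Real.exp (-β * γ) * Z := by
            apply mul_le_mul _ hZge (Real.exp_pos _).le (Real.exp_pos _).le
            apply Real.exp_le_exp.2
            nlinarith
  -- sum = 1
  have hsum1 : ∑ b, π b = 1 := by
    simp only [hπ]
    rw [← Finset.sum_div, ← hZ, div_self hZpos.ne']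
  have hsplit : ∑ b ∈ M, π b = 1 - ∑ b ∈ Mᶜ, π b := by
    have := Finset.sum_add_sum_compl M π
    linarith [hsum1]
  have htail : ∑ b ∈ Mᶜ, π b ≤ (Fintype.card B : ℝ) * Real.exp (-β * γ) := by
    calc ∑ b ∈ Mᶜ, π b ≤ ∑ _b ∈ Mᶜ, Real.exp (-β * γ) :=
          Finset.sum_le_sum (fun b hb => hbound b (Finset.mem_compl.1 hb))
      _ = (Mᶜ.card : ℝ) * Real.exp (-β * γ) := by rw [Finset.sum_const]; ring
      _ ≤ (Fintype.card B : ℝ) * Real.exp (-β * γ) := by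
          apply mul_le_mul_of_nonneg_right _ (Real.exp_pos _).le
          exact_mod_cast Finset.card_le_univ _
  exact ⟨hγpos, hbound, by linarith⟩
end

section
/- Let (P_l)_{l≥0} be stochastic matrices on a finite state space S with Dobrushin coefficients satisfying Σ_{l=0}^∞ (1 − δ(P_l)) = ∞. Then for all m ≥ 0, sup over pairs of initial distributions μ, ν of d_TV(μ P(m;n), ν P(m;n)) → 0 as n → ∞, where P(m;n) = P_m P_{m+1} ⋯ P_{n−1}; i.e., the time-inhomogeneous Markov chain is weakly ergodic. -/
noncomputable def dobrushin {S : Type*} [Fintype S] (P : Matrix S S ℝ) : ℝ :=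
  1 - ⨅ p : S × S, ∑ z, min (P p.1 z) (P p.2 z)

noncomputable def tvDist {S : Type*} [Fintype S] (μ ν : S → ℝ) : ℝ :=
  (∑ x, |μ x - ν x|) / 2

def IsDist {S : Type*} [Fintype S] (μ : S → ℝ) : Prop :=
  (∀ x, 0 ≤ μ x) ∧ ∑ x, μ x = 1

noncomputable def prodMat {S : Type*} [Fintype S] [DecidableEq S]
    (P : ℕ → Matrix S S ℝ) (m : ℕ) : ℕ → Matrix S S ℝ
  | 0 => 1
  | k + 1 => prodMat P m k * P (m + k)

section aux
open Finset Matrix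

variable {S : Type*} [Fintype S] [DecidableEq S] [Nonempty S]

lemma minsum_le (P : Matrix S S ℝ) (x y : S) :
    1 - ∑ z, min (P x z) (P y z) ≤ dobrushin P := by
  have h := ciInf_le (Set.Finite.bddBelow (Set.finite_range
    (fun p : S × S => ∑ z, min (P p.1 z) (P p.2 z)))) (x, y)
  simp only [dobrushin]
  linarith

lemma dob_nonneg (P : Matrix S S ℝ) (hP2 : ∀ x, ∑ y, P x y = 1) :
    0 ≤ dobrushin P := by
  obtain ⟨x⟩ := (inferInstance : Nonempty S)
  have h1 : ∑ z, min (P x z) (P x z) = 1 := by simp [hP2 x]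
  have := minsum_le P x x
  linarith

lemma dob_le_one (P : Matrix S S ℝ) (hP1 : ∀ x y, 0 ≤ P x y) : dobrushin P ≤ 1 := by
  have h : (0:ℝ) ≤ ⨅ p : S × S, ∑ z, min (P p.1 z) (P p.2 z) :=
    le_ciInf (fun p => Finset.sum_nonneg fun z _ => le_min (hP1 _ _) (hP1 _ _))
  simp only [dobrushin]
  linarith

lemma abs_sub_eq_min (u v : ℝ) : |u - v| = u + v - 2 * min u v := by
  rcases le_total u v with h | h
  · rw [abs_of_nonpos (by linarith), min_eq_left h]; ring
  · rw [abs_of_nonneg (by linarith), min_eq_right h]; ring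

lemma row_tv_le (P : Matrix S S ℝ) (hP2 : ∀ x, ∑ y, P x y = 1) (x y : S) :
    ∑ z, |P x z - P y z| ≤ 2 * dobrushin P := by
  have h1 : ∑ z, |P x z - P y z| = 2 - 2 * ∑ z, min (P x z) (P y z) := by
    simp only [abs_sub_eq_min]
    rw [Finset.sum_sub_distrib, Finset.sum_add_distrib, hP2 x, hP2 y, ← Finset.mul_sum]
    ring
  have h2 := minsum_le P x y
  linarith

lemma tv_contract (P : Matrix S S ℝ) (hP1 : ∀ x y, 0 ≤ P x y) (hP2 : ∀ x, ∑ y, P x y = 1)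
    (μ ν : S → ℝ) (hμ : IsDist μ) (hν : IsDist ν) :
    tvDist (Matrix.vecMul μ P) (Matrix.vecMul ν P) ≤ dobrushin P * tvDist μ ν := by
  classical
  set f : S → ℝ := fun x => μ x - ν x with hf
  set a : S → ℝ := fun x => max (f x) 0 with ha
  set b : S → ℝ := fun x => max (-f x) 0 with hb
  have hab : ∀ x, a x - b x = f x := by
    intro x; rcases le_total (f x) 0 with h | h
    · simp [ha, hb, max_eq_right h, max_eq_left (by linarith : (0:ℝ) ≤ -f x)]
    · simp [ha, hb, max_eq_left h, max_eq_right (by linarith : -f x ≤ (0:ℝ))]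
  have habs : ∀ x, a x + b x = |f x| := by
    intro x; rcases le_total (f x) 0 with h | h
    · simp [ha, hb, max_eq_right h, max_eq_left (by linarith : (0:ℝ) ≤ -f x), abs_of_nonpos h]
    · simp [ha, hb, max_eq_left h, max_eq_right (by linarith : -f x ≤ (0:ℝ)), abs_of_nonneg h]
  have ha0 : ∀ x, 0 ≤ a x := fun x => le_max_right _ _
  have hb0 : ∀ x, 0 ≤ b x := fun x => le_max_right _ _
  have hsumf : ∑ x, f x = 0 := by
    simp only [hf, Finset.sum_sub_distrib, hμ.2, hν.2, sub_self]
  set c : ℝ := ∑ x, a x with hc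
  have hsumb : ∑ x, b x = c := by
    have : ∑ x, (a x - b x) = 0 := by rw [Finset.sum_congr rfl fun x _ => hab x, hsumf]
    rw [Finset.sum_sub_distrib] at this
    linarith
  have htv : tvDist μ ν = c := by
    have : ∑ x, |f x| = 2 * c := by
      rw [← Finset.sum_congr rfl fun x _ => habs x, Finset.sum_add_distrib, hsumb]; ring
    simp only [tvDist, hf] at this ⊢
    rw [this]; ring
  have hc0 : 0 ≤ c := Finset.sum_nonneg fun x _ => ha0 x
  rcases eq_or_lt_of_le hc0 with hceq | hcpos
  · -- c = 0 : μ = ν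
    have hfz : ∀ x, f x = 0 := by
      intro x
      have h1 : a x = 0 := by
        have := Finset.sum_eq_zero_iff_of_nonneg (fun x _ => ha0 x) |>.mp hceq.symm
        exact this x (Finset.mem_univ x)
      have h2 : b x = 0 := by
        have := Finset.sum_eq_zero_iff_of_nonneg (fun x _ => hb0 x) |>.mp
          (by rw [hsumb]; exact hceq.symm)
        exact this x (Finset.mem_univ x)
      have := hab x; rw [h1, h2] at this; linarith
    have : μ = ν := funext fun x => by have := hfz x; simp only [hf] at this; linarith
    rw [this]
    have h0 : tvDist (Matrix.vecMul ν P) (Matrix.vecMul ν P) = 0 := by simp [tvDist]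
    have h0' : tvDist ν ν = 0 := by simp [tvDist]
    rw [h0, h0', mul_zero]
  · -- main case
    have key : ∀ z, |Matrix.vecMul μ P z - Matrix.vecMul ν P z| * c ≤
        ∑ x, ∑ y, a x * b y * |P x z - P y z| := by
      intro z
      have hdiff : Matrix.vecMul μ P z - Matrix.vecMul ν P z = ∑ x, f x * P x z := by
        simp only [Matrix.vecMul, dotProduct, hf]
        rw [← Finset.sum_sub_distrib]
        exact Finset.sum_congr rfl fun x _ => by ring
      have h1 : (∑ x, f x * P x z) * c = ∑ x, ∑ y, a x * b y * (P x z - P y z) := by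
        have e1 : (∑ x, a x * P x z) * c = ∑ x, ∑ y, a x * b y * P x z := by
          rw [← hsumb, Finset.sum_mul]
          exact Finset.sum_congr rfl fun x _ => by
            rw [Finset.mul_sum]; exact Finset.sum_congr rfl fun y _ => by ring
        have e2 : (∑ y, b y * P y z) * c = ∑ x, ∑ y, a x * b y * P y z := by
          rw [hc, Finset.sum_comm (γ := S)]
          rw [Finset.sum_mul]
          exact Finset.sum_congr rfl fun y _ => by
            rw [Finset.mul_sum]; exact Finset.sum_congr rfl fun x _ => by ring
        have e3 : ∑ x, f x * P x z = ∑ x, a x * P x z - ∑ y, b y * P y z := by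
          rw [← Finset.sum_sub_distrib]
          exact Finset.sum_congr rfl fun x _ => by rw [← hab x]; ring
        rw [e3, sub_mul, e1, e2, ← Finset.sum_sub_distrib]
        exact Finset.sum_congr rfl fun x _ => by
          rw [← Finset.sum_sub_distrib]
          exact Finset.sum_congr rfl fun y _ => by ring
      rw [← abs_of_nonneg hc0, ← abs_mul, hdiff, h1]
      calc |∑ x, ∑ y, a x * b y * (P x z - P y z)|
          ≤ ∑ x, |∑ y, a x * b y * (P x z - P y z)| := Finset.abs_sum_le_sum_abs _ _
        _ ≤ ∑ x, ∑ y, |a x * b y * (P x z - P y z)| :=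
            Finset.sum_le_sum fun x _ => Finset.abs_sum_le_sum_abs _ _
        _ = ∑ x, ∑ y, a x * b y * |P x z - P y z| := by
            refine Finset.sum_congr rfl fun x _ => Finset.sum_congr rfl fun y _ => ?_
            rw [abs_mul, abs_mul, abs_of_nonneg (ha0 x), abs_of_nonneg (hb0 y)]
    have main : (∑ z, |Matrix.vecMul μ P z - Matrix.vecMul ν P z|) * c ≤
        2 * dobrushin P * c * c := by
      calc (∑ z, |Matrix.vecMul μ P z - Matrix.vecMul ν P z|) * c
          = ∑ z, |Matrix.vecMul μ P z - Matrix.vecMul ν P z| * c := by rw [Finset.sum_mul]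
        _ ≤ ∑ z, ∑ x, ∑ y, a x * b y * |P x z - P y z| :=
            Finset.sum_le_sum fun z _ => key z
        _ = ∑ x, ∑ y, a x * b y * ∑ z, |P x z - P y z| := by
            rw [Finset.sum_comm]
            refine Finset.sum_congr rfl fun x _ => ?_
            rw [Finset.sum_comm]
            refine Finset.sum_congr rfl fun y _ => ?_
            rw [Finset.mul_sum]
        _ ≤ ∑ x, ∑ y, a x * b y * (2 * dobrushin P) := by
            refine Finset.sum_le_sum fun x _ => Finset.sum_le_sum fun y _ => ?_
            exact mul_le_mul_of_nonneg_left (row_tv_le P hP2 x y)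
              (mul_nonneg (ha0 x) (hb0 y))
        _ = 2 * dobrushin P * c * c := by
            simp only [← Finset.sum_mul, ← Finset.mul_sum]
            rw [← hc, hsumb]; ring
    have : ∑ z, |Matrix.vecMul μ P z - Matrix.vecMul ν P z| ≤ 2 * dobrushin P * c :=
      le_of_mul_le_mul_right (by nlinarith [main]) hcpos
    rw [htv]
    simp only [tvDist]
    linarith

lemma vecMul_isDist (P : Matrix S S ℝ) (hP1 : ∀ x y, 0 ≤ P x y) (hP2 : ∀ x, ∑ y, P x y = 1)
    (μ : S → ℝ) (hμ : IsDist μ) : IsDist (Matrix.vecMul μ P) := by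
  constructor
  · intro y
    exact Finset.sum_nonneg fun x _ => mul_nonneg (hμ.1 x) (hP1 x y)
  · calc ∑ y, Matrix.vecMul μ P y = ∑ y, ∑ x, μ x * P x y := by
          refine Finset.sum_congr rfl fun y _ => ?_
          simp [Matrix.vecMul, dotProduct]
      _ = ∑ x, μ x * ∑ y, P x y := by
          rw [Finset.sum_comm]
          exact Finset.sum_congr rfl fun x _ => (Finset.mul_sum _ _ _).symm
      _ = 1 := by simp only [hP2]; simp [hμ.2]

lemma prodMat_nonneg (P : ℕ → Matrix S S ℝ) (hP1 : ∀ l x y, 0 ≤ P l x y) (m k : ℕ) :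
    ∀ x y, 0 ≤ prodMat P m k x y := by
  induction k with
  | zero => intro x y; simp [prodMat, Matrix.one_apply]; positivity
  | succ k ih =>
    intro x y
    simp only [prodMat, Matrix.mul_apply]
    exact Finset.sum_nonneg fun z _ => mul_nonneg (ih x z) (hP1 _ z y)

lemma prodMat_rowsum (P : ℕ → Matrix S S ℝ) (hP2 : ∀ l x, ∑ y, P l x y = 1) (m k : ℕ) :
    ∀ x, ∑ y, prodMat P m k x y = 1 := by
  induction k with
  | zero => intro x; simp [prodMat, Matrix.one_apply]
  | succ k ih =>
    intro x
    simp only [prodMat, Matrix.mul_apply]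
    rw [Finset.sum_comm]
    calc ∑ z, ∑ y, prodMat P m k x z * P (m + k) z y
        = ∑ z, prodMat P m k x z * ∑ y, P (m + k) z y := by
          exact Finset.sum_congr rfl fun z _ => (Finset.mul_sum _ _ _).symm
      _ = 1 := by simp only [hP2]; simp [ih x]

end aux

theorem stmt16 {S : Type*} [Fintype S] [DecidableEq S] [Nonempty S]
    (P : ℕ → Matrix S S ℝ)
    (hP1 : ∀ l x y, 0 ≤ P l x y) (hP2 : ∀ l x, ∑ y, P l x y = 1)
    (hdiv : ¬ Summable (fun l : ℕ => 1 - dobrushin (P l))) :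
    ∀ m : ℕ, Filter.Tendsto
      (fun k : ℕ => ⨆ μν : {μ : S → ℝ // IsDist μ} × {μ : S → ℝ // IsDist μ},
        tvDist (Matrix.vecMul μν.1.1 (prodMat P m k)) (Matrix.vecMul μν.2.1 (prodMat P m k)))
      Filter.atTop (nhds 0) := by
  intro m
  have hNe : Nonempty {μ : S → ℝ // IsDist μ} := by
    obtain ⟨x0⟩ := (inferInstance : Nonempty S)
    refine ⟨⟨fun x => if x = x0 then 1 else 0, fun x => by by_cases h : x = x0 <;> simp [h], by simp⟩⟩
  have hNe2 : Nonempty ({μ : S → ℝ // IsDist μ} × {μ : S → ℝ // IsDist μ}) := by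
    obtain ⟨a⟩ := hNe
    exact ⟨(a, a)⟩
  set D : ℕ → ℝ := fun k => ∏ l ∈ Finset.range k, dobrushin (P (m + l)) with hD
  have hkey : ∀ k (μ ν : S → ℝ), IsDist μ → IsDist ν →
      tvDist (Matrix.vecMul μ (prodMat P m k)) (Matrix.vecMul ν (prodMat P m k)) ≤ D k := by
    intro k
    induction k with
    | zero =>
      intro μ ν hμ hν
      simp only [prodMat, Matrix.vecMul_one, hD, Finset.range_zero, Finset.prod_empty]
      have h1 : ∑ x, |μ x - ν x| ≤ ∑ x, (μ x + ν x) :=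
        Finset.sum_le_sum fun x _ => by
          have h := abs_sub_abs_le_abs_sub (μ x) (ν x)
          have := abs_sub (μ x) (ν x)
          rw [abs_of_nonneg (hμ.1 x), abs_of_nonneg (hν.1 x)] at this
          exact this
      rw [Finset.sum_add_distrib, hμ.2, hν.2] at h1
      simp only [tvDist]
      linarith
    | succ k ih =>
      intro μ ν hμ hν
      have hμ' := vecMul_isDist (prodMat P m k) (prodMat_nonneg P hP1 m k)
        (prodMat_rowsum P hP2 m k) μ hμ
      have hν' := vecMul_isDist (prodMat P m k) (prodMat_nonneg P hP1 m k)
        (prodMat_rowsum P hP2 m k) ν hν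
      have step : tvDist (Matrix.vecMul μ (prodMat P m (k + 1)))
          (Matrix.vecMul ν (prodMat P m (k + 1))) ≤
          dobrushin (P (m + k)) *
            tvDist (Matrix.vecMul μ (prodMat P m k)) (Matrix.vecMul ν (prodMat P m k)) := by
        simp only [prodMat, ← Matrix.vecMul_vecMul]
        exact tv_contract (P (m + k)) (hP1 _) (hP2 _) _ _ hμ' hν'
      calc tvDist (Matrix.vecMul μ (prodMat P m (k + 1)))
            (Matrix.vecMul ν (prodMat P m (k + 1)))
          ≤ dobrushin (P (m + k)) *
              tvDist (Matrix.vecMul μ (prodMat P m k)) (Matrix.vecMul ν (prodMat P m k)) := step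
        _ ≤ dobrushin (P (m + k)) * D k :=
            mul_le_mul_of_nonneg_left (ih μ ν hμ hν) (dob_nonneg _ (hP2 _))
        _ = D (k + 1) := by simp only [hD, Finset.prod_range_succ]; ring
  have hD0 : ∀ k, 0 ≤ D k := fun k => Finset.prod_nonneg fun l _ => dob_nonneg _ (hP2 _)
  have hDexp : ∀ k, D k ≤ Real.exp (-∑ l ∈ Finset.range k, (1 - dobrushin (P (m + l)))) := by
    intro k
    calc D k ≤ ∏ l ∈ Finset.range k, Real.exp (-(1 - dobrushin (P (m + l)))) := by
          refine Finset.prod_le_prod (fun l _ => dob_nonneg _ (hP2 _)) (fun l _ => ?_)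
          have := Real.add_one_le_exp (-(1 - dobrushin (P (m + l))))
          linarith
      _ = Real.exp (∑ l ∈ Finset.range k, -(1 - dobrushin (P (m + l)))) :=
          (Real.exp_sum _ _).symm
      _ = Real.exp (-∑ l ∈ Finset.range k, (1 - dobrushin (P (m + l)))) := by
          rw [Finset.sum_neg_distrib]
  have hsum : Filter.Tendsto (fun k => ∑ l ∈ Finset.range k, (1 - dobrushin (P (m + l))))
      Filter.atTop Filter.atTop := by
    have hnn : ∀ l, 0 ≤ 1 - dobrushin (P (m + l)) := fun l => by
      have := dob_le_one (P (m + l)) (hP1 _)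
      linarith
    have hns : ¬ Summable (fun l => 1 - dobrushin (P (m + l))) := fun h =>
      hdiv ((summable_nat_add_iff m).mp (by simpa [Nat.add_comm] using h))
    exact (not_summable_iff_tendsto_nat_atTop_of_nonneg hnn).mp hns
  have hDten : Filter.Tendsto D Filter.atTop (nhds 0) := by
    have h1 : Filter.Tendsto
        (fun k => Real.exp (-∑ l ∈ Finset.range k, (1 - dobrushin (P (m + l)))))
        Filter.atTop (nhds 0) :=
      Real.tendsto_exp_atBot.comp (Filter.tendsto_neg_atTop_atBot.comp hsum)
    exact tendsto_of_tendsto_of_tendsto_of_le_of_le tendsto_const_nhds h1 hD0 hDexp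
  have hub : ∀ k, ∀ p : {μ : S → ℝ // IsDist μ} × {μ : S → ℝ // IsDist μ},
      tvDist (Matrix.vecMul p.1.1 (prodMat P m k)) (Matrix.vecMul p.2.1 (prodMat P m k)) ≤ D k :=
    fun k p => hkey k p.1.1 p.2.1 p.1.2 p.2.2
  refine tendsto_of_tendsto_of_tendsto_of_le_of_le tendsto_const_nhds hDten
    (fun k => ?_) (fun k => ciSup_le (hub k))
  have hbdd : BddAbove (Set.range fun p : {μ : S → ℝ // IsDist μ} × {μ : S → ℝ // IsDist μ} =>
      tvDist (Matrix.vecMul p.1.1 (prodMat P m k)) (Matrix.vecMul p.2.1 (prodMat P m k))) :=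
    ⟨D k, Set.forall_mem_range.mpr (hub k)⟩
  obtain ⟨p⟩ := hNe2
  have h0 : 0 ≤ tvDist (Matrix.vecMul p.1.1 (prodMat P m k))
      (Matrix.vecMul p.2.1 (prodMat P m k)) :=
    div_nonneg (Finset.sum_nonneg fun x _ => abs_nonneg _) (by norm_num)
  exact h0.trans (le_ciSup hbdd p)
end
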